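/- arXiv:2111.01832 — 2 statements merged into one kernel-verified Lean document; each statement's English description precedes it below -/
import Mathlib

section
/- Let t ↦ (x_t, y_t) be the unique solution of the ODE ż = B(z) on its maximal forward interval [0, 𝒯), with initial condition (x∘, y∘) ∈ S. Set h∘ = H(x∘, y∘), ȳ = √(2(h∘+1)), and let x̄ be the unique point of (x_∞, ∞) with P(x̄) = h∘ + 1. Then (x_t, y_t) ∈ (0, x̄] × [-ȳ, ȳ] for all t ∈ [0, 𝒯). -/
open Real Set

/-- The optimal-velocity function `V(x) = tanh(x-2) - tanh(-2)`. -/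
noncomputable def V (x : ℝ) : ℝ := Real.tanh (x - 2) - Real.tanh (-2)

/-- Inverse hyperbolic tangent. -/
noncomputable def artanh (v : ℝ) : ℝ := (1 / 2) * Real.log ((1 + v) / (1 - v))

/-- The equilibrium following distance `x_∞ = d (2 + artanh(v∘ + tanh(-2)))`. -/
noncomputable def xInf (d v₀ : ℝ) : ℝ := d * (2 + _root_.artanh (v₀ + Real.tanh (-2)))

/-- The potential `P(x) = α ∫_{x_∞}^x ( V(s/d) - v∘ ) ds`. -/
noncomputable def P (α d v₀ : ℝ) (x : ℝ) : ℝ :=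
  α * ∫ s in (xInf d v₀)..x, (V (s / d) - v₀)

/-- The Hamiltonian `H(x,y) = y²/2 + P(x)`. -/
noncomputable def H (α d v₀ : ℝ) (x y : ℝ) : ℝ := y ^ 2 / 2 + P α d v₀ x

/-- `IsSol α β d v₀ x y T` says that `t ↦ (x t, y t)` solves the ODE `ż = B(z)` on the
forward time interval `[0, T)`, staying in the state space `S = (0,∞) × ℝ`. -/
def IsSol (α β d v₀ : ℝ) (x y : ℝ → ℝ) (T : EReal) : Prop :=
  ∀ t : ℝ, 0 ≤ t → (t : EReal) < T →
    0 < x t ∧ HasDerivAt x (y t) t ∧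
      HasDerivAt y (-α * (V (x t / d) - v₀ + y t) - β * y t / (x t) ^ 2) t

/-- `[0, T)` is the maximal forward interval of definition. -/
def IsMaximal (α β d v₀ : ℝ) (x y : ℝ → ℝ) (T : EReal) : Prop :=
  ∀ (T' : EReal) (x' y' : ℝ → ℝ), T < T' → IsSol α β d v₀ x' y' T' →
    x' 0 = x 0 → y' 0 = y 0 → False

/-!
Along a solution the energy `H` has derivative `-(α + β / x²) y² ≤ 0`, so it never exceeds
its initial value `h∘`. Since `P` is nonnegative (it is the primitive of an increasing function
vanishing at `x_∞`), this gives `y² ≤ 2 h∘` and `P(x) ≤ h∘ < P(x̄)`; as `P` is strictly increasing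
on `[x_∞, ∞)` and `x̄ > x_∞`, the latter forces `x ≤ x̄`.
-/

namespace Real

theorem continuous_tanh : Continuous tanh :=
  (continuous_sinh.div continuous_cosh fun x ↦ (cosh_pos x).ne').congr fun x ↦
    (tanh_eq_sinh_div_cosh x).symm

theorem tanh_strictMono : StrictMono tanh := fun a b hab ↦ by
  have mem (x : ℝ) : tanh x ∈ Ioo (-1) 1 := ⟨neg_one_lt_tanh x, tanh_lt_one x⟩
  rwa [← strictMonoOn_artanh.lt_iff_lt (mem a) (mem b), artanh_tanh, artanh_tanh]

end Real

theorem artanh_eq_real_artanh {v : ℝ} (hv : v ∈ Icc (-1) 1) : _root_.artanh v = Real.artanh v :=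
  (Real.artanh_eq_half_log hv).symm

theorem V_strictMono : StrictMono V := fun _ _ h ↦
  sub_lt_sub_right (Real.tanh_strictMono (sub_lt_sub_right h 2)) _

theorem continuous_V : Continuous V :=
  (Real.continuous_tanh.comp (continuous_sub_right 2)).sub continuous_const

section Potential

variable {α d v₀ : ℝ}

theorem V_xInf_div (hd : d ≠ 0) (hv₀ : v₀ ∈ Ioo 0 (1 + tanh 2)) : V (xInf d v₀ / d) = v₀ := by
  have hu : v₀ + tanh (-2) ∈ Ioo (-1) 1 := by
    rw [tanh_neg]
    constructor <;> linarith [hv₀.1, hv₀.2, tanh_lt_one 2]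
  rw [V, xInf, mul_div_cancel_left₀ _ hd, add_sub_cancel_left,
    artanh_eq_real_artanh (Ioo_subset_Icc_self hu), Real.tanh_artanh hu, add_sub_cancel_right]

theorem v₀_lt_V_div_iff (hd : 0 < d) (hv₀ : v₀ ∈ Ioo 0 (1 + tanh 2)) {s : ℝ} :
    v₀ < V (s / d) ↔ xInf d v₀ < s := by
  nth_rw 1 [← V_xInf_div hd.ne' hv₀]
  rw [V_strictMono.lt_iff_lt, div_lt_div_iff_of_pos_right hd]

theorem V_div_lt_v₀_iff (hd : 0 < d) (hv₀ : v₀ ∈ Ioo 0 (1 + tanh 2)) {s : ℝ} :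
    V (s / d) < v₀ ↔ s < xInf d v₀ := by
  nth_rw 1 [← V_xInf_div hd.ne' hv₀]
  rw [V_strictMono.lt_iff_lt, div_lt_div_iff_of_pos_right hd]

theorem hasDerivAt_P (x : ℝ) : HasDerivAt (P α d v₀) (α * (V (x / d) - v₀)) x :=
  (((continuous_V.comp (continuous_id.div_const d)).sub continuous_const).integral_hasStrictDerivAt
    (xInf d v₀) x).hasDerivAt.const_mul α

theorem continuous_P : Continuous (P α d v₀) :=
  continuous_iff_continuousAt.2 fun x ↦ (hasDerivAt_P x).continuousAt

theorem P_xInf : P α d v₀ (xInf d v₀) = 0 := by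
  simp [P]

variable (hα : 0 < α) (hd : 0 < d) (hv₀ : v₀ ∈ Ioo 0 (1 + tanh 2))
include hα hd hv₀

theorem P_strictMonoOn : StrictMonoOn (P α d v₀) (Ici (xInf d v₀)) := by
  refine strictMonoOn_of_hasDerivWithinAt_pos (convex_Ici _) continuous_P.continuousOn
    (fun x _ ↦ (hasDerivAt_P x).hasDerivWithinAt) fun x hx ↦ ?_
  rw [interior_Ici] at hx
  exact mul_pos hα (sub_pos.2 ((v₀_lt_V_div_iff hd hv₀).2 hx))

theorem P_strictAntiOn : StrictAntiOn (P α d v₀) (Iic (xInf d v₀)) := by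
  refine strictAntiOn_of_hasDerivWithinAt_neg (convex_Iic _) continuous_P.continuousOn
    (fun x _ ↦ (hasDerivAt_P x).hasDerivWithinAt) fun x hx ↦ ?_
  rw [interior_Iic] at hx
  exact mul_neg_of_pos_of_neg hα (sub_neg.2 ((V_div_lt_v₀_iff hd hv₀).2 hx))

theorem P_nonneg (x : ℝ) : 0 ≤ P α d v₀ x := by
  rw [← P_xInf (α := α)]
  rcases le_total x (xInf d v₀) with hx | hx
  · exact (P_strictAntiOn hα hd hv₀).antitoneOn hx self_mem_Iic hx
  · exact (P_strictMonoOn hα hd hv₀).monotoneOn self_mem_Ici hx hx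

theorem le_of_P_le_P {x xbar : ℝ} (hxbar : xInf d v₀ < xbar) (hP : P α d v₀ x ≤ P α d v₀ xbar) :
    x ≤ xbar := by
  by_contra! hlt
  exact hP.not_gt <|
    P_strictMonoOn hα hd hv₀ (mem_Ici.2 hxbar.le) (mem_Ici.2 (hxbar.trans hlt).le) hlt

end Potential

section Energy

variable {α β d v₀ : ℝ} {x y : ℝ → ℝ} {T : EReal}

theorem IsSol.hasDerivAt_H (hsol : IsSol α β d v₀ x y T) {t : ℝ} (ht : 0 ≤ t)
    (htT : (t : EReal) < T) :
    HasDerivAt (fun s ↦ H α d v₀ (x s) (y s)) (-(α + β / x t ^ 2) * y t ^ 2) t := by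
  obtain ⟨hx_pos, hx', hy'⟩ := hsol t ht htT
  refine (((hy'.fun_pow 2).div_const 2).add ((hasDerivAt_P (x t)).comp t hx')).congr_deriv ?_
  field_simp
  ring

theorem IsSol.H_le_H_zero (hα : 0 ≤ α) (hβ : 0 ≤ β) (hsol : IsSol α β d v₀ x y T) {t : ℝ}
    (ht : 0 ≤ t) (htT : (t : EReal) < T) :
    H α d v₀ (x t) (y t) ≤ H α d v₀ (x 0) (y 0) := by
  have admissible : ∀ s ∈ Icc 0 t, 0 ≤ s ∧ (s : EReal) < T := fun s hs ↦
    ⟨hs.1, (EReal.coe_le_coe_iff.2 hs.2).trans_lt htT⟩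
  have hanti : AntitoneOn (fun s ↦ H α d v₀ (x s) (y s)) (Icc 0 t) := by
    refine antitoneOn_of_hasDerivWithinAt_nonpos (f' := fun s ↦ -(α + β / x s ^ 2) * y s ^ 2)
      (convex_Icc 0 t)
      (fun s hs ↦ (hsol.hasDerivAt_H (admissible s hs).1 (admissible s hs).2)
        |>.continuousAt.continuousWithinAt)
      (fun s hs ↦ ?_) (fun s _ ↦ ?_)
    · have hs' := admissible s (interior_subset hs)
      exact (hsol.hasDerivAt_H hs'.1 hs'.2).hasDerivWithinAt
    · exact mul_nonpos_of_nonpos_of_nonneg (neg_nonpos.2 (by positivity)) (sq_nonneg _)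
  exact hanti (left_mem_Icc.2 ht) (right_mem_Icc.2 ht) ht

end Energy

theorem solution_in_box_general (α β d v₀ : ℝ) (hα : 0 < α) (hβ : 0 < β) (hd : 0 < d)
    (hv₀ : v₀ ∈ Set.Ioo 0 (1 + Real.tanh 2))
    (x y : ℝ → ℝ) (T : EReal)
    (x₀ y₀ : ℝ) (hinit : x 0 = x₀ ∧ y 0 = y₀)
    (hsol : IsSol α β d v₀ x y T)
    (h₀ : ℝ) (hh₀ : h₀ = H α d v₀ x₀ y₀)
    (ybar : ℝ) (hybar : ybar = Real.sqrt (2 * (h₀ + 1)))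
    (xbar : ℝ) (hxbar : xbar ∈ Set.Ioi (xInf d v₀) ∧ P α d v₀ xbar = h₀ + 1) :
    ∀ t : ℝ, 0 ≤ t → (t : EReal) < T →
      (x t, y t) ∈ Set.Ioc 0 xbar ×ˢ Set.Icc (-ybar) ybar := by
  intro t ht htT
  have hH := hsol.H_le_H_zero hα.le hβ.le ht htT
  rw [hinit.1, hinit.2, ← hh₀, H] at hH
  have hP := P_nonneg hα hd hv₀ (x t)
  have hy : |y t| ≤ ybar := by
    rw [hybar, ← Real.sqrt_sq_eq_abs]
    exact Real.sqrt_le_sqrt (by linarith)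
  have hx : x t ≤ xbar := le_of_P_le_P hα hd hv₀ hxbar.1 (by linarith [hxbar.2, sq_nonneg (y t)])
  exact ⟨⟨(hsol t ht htT).1, hx⟩, abs_le.1 hy⟩

/-- the solution stays in the compact box `(0, x̄] × [-ȳ, ȳ]` for all
`t ∈ [0, 𝒯)`, where `h∘ = H(x∘,y∘)`, `ȳ = √(2(h∘+1))`, and `x̄` is the unique point of
`(x_∞, ∞)` with `P(x̄) = h∘ + 1`. -/
theorem solution_in_box (α β d v₀ : ℝ) (hα : 0 < α) (hβ : 0 < β) (hd : 0 < d)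
    (hv₀ : v₀ ∈ Set.Ioo 0 (1 + Real.tanh 2))
    (x y : ℝ → ℝ) (T : EReal) (hT : 0 < T)
    (x₀ y₀ : ℝ) (hx₀ : 0 < x₀) (hinit : x 0 = x₀ ∧ y 0 = y₀)
    (hsol : IsSol α β d v₀ x y T) (hmax : IsMaximal α β d v₀ x y T)
    (h₀ : ℝ) (hh₀ : h₀ = H α d v₀ x₀ y₀)
    (ybar : ℝ) (hybar : ybar = Real.sqrt (2 * (h₀ + 1)))
    (xbar : ℝ) (hxbar : xbar ∈ Set.Ioi (xInf d v₀) ∧ P α d v₀ xbar = h₀ + 1) :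
    ∀ t : ℝ, 0 ≤ t → (t : EReal) < T →
      (x t, y t) ∈ Set.Ioc 0 xbar ×ˢ Set.Icc (-ybar) ybar :=
  solution_in_box_general α β d v₀ hα hβ hd hv₀ x y T x₀ y₀ hinit hsol h₀ hh₀ ybar hybar xbar hxbar
end

section
/- Let t ↦ (x_t, y_t) be the unique solution of the ODE ż = B(z) on its maximal forward interval [0, 𝒯) with (x∘, y∘) ∈ S, suppose 𝒯 < ∞, and let x_- = min{x∘, x_∞} and ť = sup{ t < 𝒯 : x_t ≥ x_- /2 }. Then the derivative of t ↦ y_t is strictly positive on (ť, 𝒯); i.e., y is strictly increasing there. -/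
/-!
On `(ť, 𝒯)` we have `x < x₋/2 < x_∞`, hence `V(x/d) < v∘`, and then `ẏ > 0` wherever `y ≤ 0`.
So it suffices to show `y ≤ 0` there. If `y(t₁) > 0` for some `t₁ > ť`, then `y` can never
come back below zero, so `x` is nondecreasing and `y` grows at most linearly: the trajectory
stays in a compact box of `S` up to `𝒯`. On a neighbourhood of that box `B` is `C¹`, hence
Lipschitz and bounded, so Picard–Lindelöf started at a time close enough to `𝒯` continues the
solution past `𝒯`, contradicting maximality.
-/

open Real Set Filter Topology

open Metric NNReal

namespace IsPicardLindelof

variable {E : Type*} [NormedAddCommGroup E] [NormedSpace ℝ E] [CompleteSpace E]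
  {f : ℝ → E → E} {tmin tmax : ℝ} {t₀ : Icc tmin tmax} {x₀ x : E} {a r L K : ℝ≥0}

theorem exists_eq_forall_mem_Icc_hasDerivWithinAt_mem_closedBall
    (hf : IsPicardLindelof f t₀ x₀ a r L K) (hx : x ∈ closedBall x₀ r) :
    ∃ α : ℝ → E, α t₀ = x ∧ ∀ t ∈ Icc tmin tmax,
      HasDerivWithinAt α (f t (α t)) (Icc tmin tmax) t ∧ α t ∈ closedBall x₀ a := by
  obtain ⟨α, hα⟩ := ODE.FunSpace.exists_isFixedPt_next hf hx
  refine ⟨α.compProj, by rw [ODE.FunSpace.compProj_val, ← hα, ODE.FunSpace.next_apply₀],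
    fun t ht ↦ ⟨?_, α.compProj_mem_closedBall hf.mul_max_le⟩⟩
  refine ODE.hasDerivWithinAt_picard_Icc t₀.2 hf.continuousOn_uncurry
    α.continuous_compProj.continuousOn (fun _ _ ↦ α.compProj_mem_closedBall hf.mul_max_le)
    x ht |>.congr_of_mem (fun t' ht' ↦ ?_) ht
  nth_rw 1 [← hα]
  rw [ODE.FunSpace.compProj_of_mem ht', ODE.FunSpace.next_apply]

end IsPicardLindelof

theorem HasDerivAt.of_hasDerivWithinAt_Iic_Ici {E : Type*} [NormedAddCommGroup E]
    [NormedSpace ℝ E] {f : ℝ → E} {f' : E} {t : ℝ}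
    (hl : HasDerivWithinAt f f' (Iic t) t) (hr : HasDerivWithinAt f f' (Ici t) t) :
    HasDerivAt f f' t := by
  simpa [Iic_union_Ici] using hl.union hr

section Extension

variable {E : Type*} [NormedAddCommGroup E] [NormedSpace ℝ E] [CompleteSpace E]

theorem exists_extension_of_forall_mem {v : E → E} {U s : Set E} (hU : Convex ℝ U)
    (hUc : IsCompact U) (hv : ContDiffOn ℝ 1 v U) {a : ℝ} (ha : 0 < a)
    (hsU : ∀ p ∈ s, closedBall p a ⊆ U)
    {γ : ℝ → E} {t₁ T : ℝ} (hT : t₁ < T) (hγ : ∀ t ∈ Ico t₁ T, HasDerivAt γ (v (γ t)) t)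
    (hγs : ∀ t ∈ Ico t₁ T, γ t ∈ s) :
    ∃ t₀ ∈ Ioo t₁ T, ∃ T' > T, ∃ γ' : ℝ → E, EqOn γ' γ (Iio t₀) ∧
      ∀ t ∈ Ico t₀ T', HasDerivAt γ' (v (γ' t)) t ∧ γ' t ∈ U := by
  obtain ⟨K, hK⟩ := hv.exists_lipschitzOnWith one_ne_zero hU hUc
  obtain ⟨C, hC⟩ := hUc.exists_bound_of_continuousOn hv.continuousOn
  set L : ℝ≥0 := C.toNNReal
  -- Picard–Lindelöf on a ball of radius `a` around any point of `s` runs for this time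
  set h : ℝ := a / (L + 1)
  have hh : 0 < h := by positivity
  set t₀ : ℝ := max ((t₁ + T) / 2) (T - h / 2)
  have ht₀ : t₀ ∈ Ioo t₁ T :=
    ⟨by simp [t₀]; left; linarith, by simp [t₀]; constructor <;> linarith⟩
  have hTh : T < t₀ + h := by have : T - h / 2 ≤ t₀ := le_max_right _ _; linarith
  have hball : closedBall (γ t₀) a ⊆ U := hsU _ (hγs _ ⟨ht₀.1.le, ht₀.2⟩)
  have hpl : IsPicardLindelof (fun _ ↦ v) (tmin := t₀) (tmax := t₀ + h)
      ⟨t₀, le_rfl, by linarith⟩ (γ t₀) a.toNNReal 0 L K := by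
    refine .of_time_independent (fun q hq ↦ ?_) (hK.mono ?_) ?_
    · exact (hC q (hball (by simpa [ha.le] using hq))).trans (C.le_coe_toNNReal)
    · simpa [ha.le] using hball
    · simp only [add_sub_cancel_left, sub_self, max_eq_left hh.le, NNReal.coe_zero, sub_zero,
        Real.coe_toNNReal _ ha.le]
      calc (L : ℝ) * h ≤ (L + 1) * h := by gcongr; linarith
        _ = a := by simp only [h]; field_simp
  obtain ⟨α, hα₀, hα⟩ := hpl.exists_eq_forall_mem_Icc_hasDerivWithinAt_mem_closedBall
    (mem_closedBall_self le_rfl)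
  set γ' : ℝ → E := fun t ↦ if t < t₀ then γ t else α t
  have hγ'α : EqOn γ' α (Ici t₀) := fun t ht ↦ if_neg (not_lt.2 ht)
  have hγ'γ : EqOn γ' γ (Iic t₀) := fun t (ht : t ≤ t₀) ↦ by
    rcases ht.eq_or_lt with rfl | ht
    · simp [γ', hα₀]
    · exact if_pos ht
  refine ⟨t₀, ht₀, t₀ + h, hTh, γ', fun t (ht : t < t₀) ↦ hγ'γ ht.le, fun t ht ↦ ?_⟩
  rw [hγ'α ht.1]
  refine ⟨?_, hball (by simpa [ha.le] using (hα t (Ico_subset_Icc_self ht)).2)⟩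
  rcases ht.1.eq_or_lt with rfl | ht₀t
  · refine .of_hasDerivWithinAt_Iic_Ici ?_ ?_
    · rw [hα₀]
      exact (hγ _ ⟨ht₀.1.le, ht₀.2⟩).hasDerivWithinAt.congr_of_mem hγ'γ self_mem_Iic
    · exact ((hα _ (Ico_subset_Icc_self ht)).1.mono_of_mem_nhdsWithin
        (Icc_mem_nhdsGE (by linarith))).congr_of_mem hγ'α self_mem_Ici
  · exact ((hα t (Ico_subset_Icc_self ht)).1.hasDerivAt (Icc_mem_nhds ht₀t ht.2))
      |>.congr_of_eventuallyEq
        (eventually_of_mem (Ioi_mem_nhds ht₀t) fun s (hs : t₀ < s) ↦ hγ'α hs.le)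

end Extension

theorem hasDerivAt_prodMk_iff {𝕜 E F : Type*} [NontriviallyNormedField 𝕜] [NormedAddCommGroup E]
    [NormedSpace 𝕜 E] [NormedAddCommGroup F] [NormedSpace 𝕜 F] {f : 𝕜 → E} {g : 𝕜 → F}
    {f' : E} {g' : F} {t : 𝕜} :
    HasDerivAt (fun s ↦ (f s, g s)) (f', g') t ↔ HasDerivAt f f' t ∧ HasDerivAt g g' t :=
  ⟨fun h ↦ ⟨(ContinuousLinearMap.fst 𝕜 E F).hasFDerivAt.comp_hasDerivAt t h,
      (ContinuousLinearMap.snd 𝕜 E F).hasFDerivAt.comp_hasDerivAt t h⟩,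
    fun h ↦ h.1.prodMk h.2⟩

theorem Real.tanh_strictMono_s11 : StrictMono Real.tanh := fun a b hab ↦ by
  by_contra! h
  have := Real.artanh_le_artanh (Real.neg_one_lt_tanh b) (Real.tanh_lt_one a) h
  rw [Real.artanh_tanh, Real.artanh_tanh] at this
  linarith

theorem Real.contDiff_tanh {n : WithTop ℕ∞} : ContDiff ℝ n Real.tanh := by
  rw [show Real.tanh = fun x ↦ Real.sinh x / Real.cosh x from funext Real.tanh_eq_sinh_div_cosh]
  exact Real.contDiff_sinh.div Real.contDiff_cosh fun x ↦ (Real.cosh_pos x).ne'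

theorem V_nonneg {a : ℝ} (ha : 0 ≤ a) : 0 ≤ V a :=
  sub_nonneg.2 (Real.tanh_strictMono_s11.monotone (by linarith))

theorem V_div_lt_of_lt_xInf {d v₀ a : ℝ} (hd : 0 < d) (hv₀ : v₀ ∈ Ioo 0 (1 + Real.tanh 2))
    (ha : a < xInf d v₀) : V (a / d) < v₀ := by
  set w := v₀ + Real.tanh (-2)
  have hw : w ∈ Ioo (-1) 1 := by
    have := Real.tanh_lt_one 2
    simp only [w, Real.tanh_neg, mem_Ioo] at hv₀ ⊢
    constructor <;> linarith [hv₀.1, hv₀.2]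
  have hA : _root_.artanh w = Real.artanh w :=
    (Real.artanh_eq_half_log (Ioo_subset_Icc_self hw)).symm
  have hlt : a / d - 2 < Real.artanh w := by
    rw [xInf, hA] at ha
    linarith [(div_lt_iff₀' hd).2 ha]
  have := Real.tanh_strictMono_s11 hlt
  rw [Real.tanh_artanh hw] at this
  simp only [V, w] at this ⊢
  linarith

/-- The vector field `B` of the ODE `ż = B(z)`. -/
noncomputable def vectorField (α β d v₀ : ℝ) (p : ℝ × ℝ) : ℝ × ℝ :=
  (p.2, -α * (V (p.1 / d) - v₀ + p.2) - β * p.2 / p.1 ^ 2)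

theorem contDiffAt_vectorField {α β d v₀ : ℝ} {p : ℝ × ℝ} (hp : p.1 ≠ 0) :
    ContDiffAt ℝ 1 (vectorField α β d v₀) p := by
  have hV : ContDiff ℝ 1 V :=
    (Real.contDiff_tanh.comp (contDiff_id.sub contDiff_const)).sub contDiff_const
  unfold vectorField
  fun_prop (disch := exact pow_ne_zero 2 hp)

theorem isSol_iff {α β d v₀ : ℝ} {x y : ℝ → ℝ} {T : EReal} :
    IsSol α β d v₀ x y T ↔ ∀ t : ℝ, 0 ≤ t → (t : EReal) < T →
      0 < x t ∧ HasDerivAt (fun s ↦ (x s, y s)) (vectorField α β d v₀ (x t, y t)) t := by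
  simp only [IsSol, vectorField, hasDerivAt_prodMk_iff]

theorem not_isMaximal_of_forall_mem_box {α β d v₀ : ℝ} {x y : ℝ → ℝ} {T t₁ δ X M : ℝ}
    (hsol : IsSol α β d v₀ x y T) (ht₁ : 0 ≤ t₁) (hT : t₁ < T) (hδ : 0 < δ)
    (hbox : ∀ t ∈ Ico t₁ T, (x t, y t) ∈ Icc δ X ×ˢ Icc (-M) M) :
    ¬ IsMaximal α β d v₀ x y T := by
  intro hmax
  set U := Icc (δ / 2) (X + δ / 2) ×ˢ Icc (-M - δ / 2) (M + δ / 2)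
  have hv : ContDiffOn ℝ 1 (vectorField α β d v₀) U := fun p hp ↦
    (contDiffAt_vectorField (by linarith [hp.1.1] : p.1 ≠ 0)).contDiffWithinAt
  have hsU : ∀ p ∈ Icc δ X ×ˢ Icc (-M) M, closedBall p (δ / 2) ⊆ U := by
    rintro ⟨a, b⟩ ⟨ha, hb⟩
    rw [← closedBall_prod_same, Real.closedBall_eq_Icc, Real.closedBall_eq_Icc]
    exact prod_mono (Icc_subset_Icc (by linarith [ha.1]) (by linarith [ha.2]))
      (Icc_subset_Icc (by linarith [hb.1]) (by linarith [hb.2]))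
  have hsol' := isSol_iff.1 hsol
  obtain ⟨t₀, ht₀, T', hT', γ, hγ, hγ'⟩ := exists_extension_of_forall_mem
    ((convex_Icc _ _).prod (convex_Icc _ _)) (isCompact_Icc.prod isCompact_Icc) hv
    (half_pos hδ) hsU hT (fun t ht ↦ (hsol' t (ht₁.trans ht.1) (EReal.coe_lt_coe_iff.2 ht.2)).2)
    hbox
  refine hmax T' (fun t ↦ (γ t).1) (fun t ↦ (γ t).2) (EReal.coe_lt_coe_iff.2 hT')
    (isSol_iff.2 fun t ht htT' ↦ ?_) (congrArg Prod.fst (hγ (ht₁.trans_lt ht₀.1)))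
    (congrArg Prod.snd (hγ (ht₁.trans_lt ht₀.1)))
  rcases lt_or_ge t t₀ with htt₀ | htt₀
  · have htT : ((t : ℝ) : EReal) < T := EReal.coe_lt_coe_iff.2 (htt₀.trans ht₀.2)
    rw [hγ htt₀]
    exact ⟨(hsol' t ht htT).1, (hsol' t ht htT).2.congr_of_eventuallyEq
      (eventually_of_mem (Iio_mem_nhds htt₀) hγ)⟩
  · obtain ⟨hγt, hγU⟩ := hγ' t ⟨htt₀, EReal.coe_lt_coe_iff.1 htT'⟩
    exact ⟨by linarith [hγU.1.1], hγt⟩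

theorem vectorField_snd_pos {α β d v₀ : ℝ} (hα : 0 < α) (hβ : 0 ≤ β) {p : ℝ × ℝ}
    (hV : V (p.1 / d) < v₀) (hy : p.2 ≤ 0) : 0 < (vectorField α β d v₀ p).2 := by
  have : β * p.2 / p.1 ^ 2 ≤ 0 := div_nonpos_of_nonpos_of_nonneg (by nlinarith) (sq_nonneg _)
  simp only [vectorField]
  nlinarith

theorem vectorField_snd_le {α β d v₀ : ℝ} (hα : 0 ≤ α) (hβ : 0 ≤ β) {p : ℝ × ℝ}
    (hV : 0 ≤ V (p.1 / d)) (hy : 0 ≤ p.2) : (vectorField α β d v₀ p).2 ≤ α * v₀ := by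
  have : 0 ≤ β * p.2 / p.1 ^ 2 := by positivity
  simp only [vectorField]
  nlinarith

theorem velocity_nonpos_of_isMaximal {α β d v₀ : ℝ} (hα : 0 < α) (hβ : 0 ≤ β) (hd : 0 ≤ d)
    {x y : ℝ → ℝ} {T t₁ X : ℝ} (hsol : IsSol α β d v₀ x y T) (hmax : IsMaximal α β d v₀ x y T)
    (ht₁ : 0 ≤ t₁) (hT : t₁ < T) (hV : ∀ t ∈ Ico t₁ T, V (x t / d) < v₀)
    (hX : ∀ t ∈ Ico t₁ T, x t ≤ X) : y t₁ ≤ 0 := by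
  by_contra! hy₁
  have hsol' : ∀ t ∈ Ico t₁ T, 0 < x t ∧ HasDerivAt x (y t) t ∧
      HasDerivAt y (vectorField α β d v₀ (x t, y t)).2 t := fun t ht ↦
    hsol t (ht₁.trans ht.1) (EReal.coe_lt_coe_iff.2 ht.2)
  have hy_cont : ContinuousOn y (Ico t₁ T) := fun t ht ↦
    (hsol' t ht).2.2.continuousAt.continuousWithinAt
  -- `y` cannot cross zero downwards, since `ẏ > 0` wherever `y ≤ 0`
  have hy_nonneg : ∀ t ∈ Ico t₁ T, 0 ≤ y t := fun t ht ↦ by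
    have hsub : Icc t₁ t ⊆ Ico t₁ T := Icc_subset_Ico_right ht.2
    have := image_le_of_deriv_right_lt_deriv_boundary (f := fun s ↦ -y s) (B := 0) (B' := 0)
      (hy_cont.mono hsub).neg
      (fun s hs ↦ (hsol' s (hsub (Ico_subset_Icc_self hs))).2.2.neg.hasDerivWithinAt)
      (by simpa using hy₁.le) (fun _ ↦ hasDerivAt_const _ _)
      (fun s hs hys ↦ neg_neg_of_pos (vectorField_snd_pos hα hβ
        (hV s (hsub (Ico_subset_Icc_self hs))) (neg_eq_zero.1 hys).le))
      ⟨ht.1, le_rfl⟩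
    simpa using this
  have hx_mono : MonotoneOn x (Ico t₁ T) :=
    monotoneOn_of_hasDerivWithinAt_nonneg (convex_Ico _ _)
      (fun t ht ↦ (hsol' t ht).2.1.continuousAt.continuousWithinAt)
      (fun t ht ↦ (hsol' t (interior_subset ht)).2.1.hasDerivWithinAt)
      (fun t ht ↦ hy_nonneg t (interior_subset ht))
  have hy_growth : MonotoneOn (fun t ↦ α * v₀ * t - y t) (Ico t₁ T) :=
    monotoneOn_of_hasDerivWithinAt_nonneg (convex_Ico _ _)
      ((continuousOn_const.mul continuousOn_id).sub hy_cont)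
      (fun t ht ↦ (((hasDerivAt_id t).const_mul (α * v₀)).sub
        (hsol' t (interior_subset ht)).2.2).hasDerivWithinAt)
      (fun t ht ↦ by
        have ht' := interior_subset ht
        have := vectorField_snd_le (d := d) (v₀ := v₀) hα.le hβ (p := (x t, y t))
          (V_nonneg (div_nonneg (hsol' t ht').1.le hd)) (hy_nonneg t ht')
        simp only [mul_one]
        linarith)
  refine not_isMaximal_of_forall_mem_box hsol ht₁ hT (hsol' t₁ ⟨le_rfl, hT⟩).1
    (X := X) (M := y t₁ + |α * v₀| * (T - t₁)) (fun t ht ↦ ?_) hmax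
  have h₁ : t₁ ∈ Ico t₁ T := ⟨le_rfl, hT⟩
  have hyt := hy_growth h₁ ht ht.1
  have hlin : α * v₀ * (t - t₁) ≤ |α * v₀| * (T - t₁) := calc
    _ ≤ |α * v₀| * (t - t₁) := mul_le_mul_of_nonneg_right (le_abs_self _) (by linarith [ht.1])
    _ ≤ |α * v₀| * (T - t₁) := mul_le_mul_of_nonneg_left (by linarith [ht.2]) (abs_nonneg _)
  exact ⟨⟨hx_mono h₁ ht ht.1, hX t ht⟩, by linarith [hy_nonneg t ht], by simp only at hyt; linarith⟩

theorem velocity_strictly_increasing_general (α β d v₀ : ℝ)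
    (hα : 0 < α) (hβ : 0 < β) (hd : 0 < d)
    (hv₀ : v₀ ∈ Set.Ioo 0 (1 + Real.tanh 2))
    (x y : ℝ → ℝ) (T : ℝ)
    (x₀ : ℝ)
    (hsol : IsSol α β d v₀ x y (T : EReal))
    (hmax : IsMaximal α β d v₀ x y (T : EReal))
    (xm : ℝ) (hxm : xm = min x₀ (xInf d v₀))
    (tc : ℝ) (htc : tc = sSup {t : ℝ | 0 ≤ t ∧ t < T ∧ xm / 2 ≤ x t}) :
    (∀ t : ℝ, tc < t → t < T → 0 < deriv y t) ∧
    StrictMonoOn y (Set.Ioo tc T) := by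
  have htc₀ : 0 ≤ tc := htc ▸ Real.sSup_nonneg fun t ht ↦ ht.1
  have hsol' : ∀ t ∈ Ioo tc T, 0 < x t ∧ HasDerivAt x (y t) t ∧
      HasDerivAt y (vectorField α β d v₀ (x t, y t)).2 t := fun t ht ↦
    hsol t (htc₀.trans ht.1.le) (EReal.coe_lt_coe_iff.2 ht.2)
  have hx_lt : ∀ t ∈ Ioo tc T, x t < xm / 2 := fun t ht ↦ by
    by_contra! h
    exact (htc ▸ ht.1).not_ge
      (le_csSup ⟨T, fun s hs ↦ hs.2.1.le⟩ ⟨htc₀.trans ht.1.le, ht.2, h⟩)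
  have hV : ∀ t ∈ Ioo tc T, V (x t / d) < v₀ := fun t ht ↦ by
    refine V_div_lt_of_lt_xInf hd hv₀ ?_
    linarith [hx_lt t ht, (hsol' t ht).1, hxm ▸ min_le_right x₀ (xInf d v₀)]
  have hy : ∀ t ∈ Ioo tc T, y t ≤ 0 := fun t ht ↦
    velocity_nonpos_of_isMaximal hα hβ.le hd.le hsol hmax (htc₀.trans ht.1.le) ht.2
      (fun s hs ↦ hV s ⟨ht.1.trans_le hs.1, hs.2⟩)
      (fun s hs ↦ (hx_lt s ⟨ht.1.trans_le hs.1, hs.2⟩).le)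
  have hderiv : ∀ t ∈ Ioo tc T, 0 < deriv y t := fun t ht ↦ by
    rw [(hsol' t ht).2.2.deriv]
    exact vectorField_snd_pos hα hβ.le (hV t ht) (hy t ht)
  refine ⟨fun t h₁ h₂ ↦ hderiv t ⟨h₁, h₂⟩, strictMonoOn_of_deriv_pos (convex_Ioo tc T)
    (fun t ht ↦ (hsol' t ht).2.2.continuousAt.continuousWithinAt) ?_⟩
  simpa only [interior_Ioo] using hderiv

/-- with `𝒯 < ∞`, `x₋ = min{x∘, x_∞}` and
`ť = sup{ t < 𝒯 : x_t ≥ x₋ / 2 }`, the derivative of `t ↦ y_t` is strictly positive on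
`(ť, 𝒯)`; in particular `y` is strictly increasing there. -/
theorem velocity_strictly_increasing (α β d v₀ : ℝ)
    (hα : 0 < α) (hβ : 0 < β) (hd : 0 < d)
    (hv₀ : v₀ ∈ Set.Ioo 0 (1 + Real.tanh 2))
    (x y : ℝ → ℝ) (T : ℝ) (hT : 0 < T)
    (x₀ y₀ : ℝ) (hx₀ : 0 < x₀) (hinit : x 0 = x₀ ∧ y 0 = y₀)
    (hsol : IsSol α β d v₀ x y (T : EReal))
    (hmax : IsMaximal α β d v₀ x y (T : EReal))
    (xm : ℝ) (hxm : xm = min x₀ (xInf d v₀))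
    (tc : ℝ) (htc : tc = sSup {t : ℝ | 0 ≤ t ∧ t < T ∧ xm / 2 ≤ x t}) :
    (∀ t : ℝ, tc < t → t < T → 0 < deriv y t) ∧
    StrictMonoOn y (Set.Ioo tc T) :=
  velocity_strictly_increasing_general α β d v₀ hα hβ hd hv₀ x y T x₀ hsol hmax xm hxm tc htc
end
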